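/- Let (Ω, F, ℙ) be a probability space, σ : Ω → Ω an invertible, ergodic, ℙ-preserving transformation, and (T_ω)_{ω∈Ω} a Blaschke product cocycle such that ω ↦ inf_{z∈𝕋}|T_ω'(z)| is measurable, ω ↦ log inf_{z∈𝕋}|T_ω'(z)| is ℙ-integrable, and ∫_Ω log inf_{z∈𝕋}|T_ω'(z)| dℙ(ω) > 0. Then for every arc A ⊂ 𝕋 with 0 < m(A) < 1 and ℙ-a.e. ω ∈ Ω, there exists n_c(ω) ∈ ℕ such that for every n ≥ n_c(ω), m(T_{σ^{−n}ω}^{(n)}(A)) = 1. -/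

import Mathlib

open MeasureTheory Filter Set

noncomputable section

/-- The unit circle 𝕋 = {z ∈ ℂ : |z| = 1}. -/
def unitCircle : Set ℂ := {z : ℂ | ‖z‖ = 1}

/-- The open unit disc D = {z ∈ ℂ : |z| < 1}. -/
def unitDisc : Set ℂ := {z : ℂ | ‖z‖ < 1}

/-- Normalized arc-length (Haar probability) measure on the unit circle, realised as a
measure on ℂ: the pushforward of Lebesgue measure on [0,1) under t ↦ e^{2πit}. -/
def mCircle : Measure ℂ :=
  Measure.map (fun t : ℝ => Complex.exp (2 * (Real.pi : ℂ) * Complex.I * (t : ℂ)))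
    (volume.restrict (Set.Ico (0 : ℝ) 1))

/-- The Poisson kernel P_x(z) = (1 − |x|²)/|z − x|². -/
def poissonK (x z : ℂ) : ℝ := (1 - ‖x‖ ^ 2) / ‖z - x‖ ^ 2

/-- `T` is a finite Blaschke product of degree `n ≥ 1`. -/
def IsBlaschke (n : ℕ) (T : ℂ → ℂ) : Prop :=
  1 ≤ n ∧ ∃ (θ₀ : ℂ) (a : Fin n → ℂ), ‖θ₀‖ = 1 ∧ (∀ i, ‖a i‖ < 1) ∧
    ∀ z : ℂ, T z = θ₀ * ∏ i, (z - a i) / (1 - (starRingEnd ℂ) (a i) * z)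

/-- inf_{z ∈ 𝕋} |T'(z)|. -/
def derivInf (T : ℂ → ℂ) : ℝ := ⨅ z : unitCircle, ‖deriv T (z : ℂ)‖

/-- The backward cocycle iterate T_{σ^{-n}ω}^{(n)} = T_{σ^{-1}ω} ∘ ⋯ ∘ T_{σ^{-n}ω}. -/
def backIter {Ω : Type*} (σinv : Ω → Ω) (T : Ω → ℂ → ℂ) : ℕ → Ω → ℂ → ℂ
  | 0, _, z => z
  | n + 1, ω, z => backIter σinv T n ω (T (σinv^[n + 1] ω) z)


/-!
Lifting `t ↦ B (e^{2πit})` through `t ↦ e^{2πit}`, for a finite Blaschke product `B`, gives a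
real function with derivative `|B'(e^{2πit})| = ∑ᵢ P_{aᵢ}(e^{2πit})`, where `P` is the Poisson
kernel. So `B` maps an arc of length `ℓ` onto a set containing an arc of length
`ℓ · inf_𝕋 |B'|`, and `T^{(n)}_{σ^{-n}ω}(A)` contains an arc of length `m(A) · exp Sₙ(σ⁻¹ω)`,
with `Sₙ` the Birkhoff sums of `log inf_𝕋 |T'|` along `σ⁻¹`. As `σ⁻¹` is ergodic and this
function has positive integral, the maximal ergodic theorem gives `Sₙ → ∞` a.e.; an arc of
length at least `1` is the whole circle.
-/

def circleExp (t : ℝ) : ℂ := Complex.exp (2 * Real.pi * Complex.I * t)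

lemma circleExp_eq_exp_mul_I (t : ℝ) :
    circleExp t = Complex.exp (((2 * Real.pi * t : ℝ) : ℂ) * Complex.I) := by
  unfold circleExp; push_cast; ring_nf

lemma norm_circleExp (t : ℝ) : ‖circleExp t‖ = 1 := by
  rw [circleExp_eq_exp_mul_I]; exact Complex.norm_exp_ofReal_mul_I _

lemma circleExp_add (s t : ℝ) : circleExp (s + t) = circleExp s * circleExp t := by
  unfold circleExp; rw [← Complex.exp_add]; push_cast; ring_nf

lemma circleExp_neg_mul_self (t : ℝ) : circleExp (-t) * circleExp t = 1 := by
  rw [← circleExp_add, neg_add_cancel]; simp [circleExp]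

lemma periodic_circleExp : Function.Periodic circleExp 1 := fun t => by
  rw [circleExp_add]; simp [circleExp]

lemma continuous_circleExp : Continuous circleExp := by
  unfold circleExp; fun_prop

lemma hasDerivAt_circleExp (t : ℝ) :
    HasDerivAt circleExp (2 * Real.pi * Complex.I * circleExp t) t := by
  have h : HasDerivAt circleExp (circleExp t * (2 * Real.pi * Complex.I * 1)) t :=
    ((hasDerivAt_id (t : ℂ)).const_mul _).cexp.comp_ofReal
  rwa [mul_one, mul_comm] at h

lemma exists_circleExp_eq {z : ℂ} (hz : ‖z‖ = 1) : ∃ t, circleExp t = z := by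
  refine ⟨Complex.arg z / (2 * Real.pi), ?_⟩
  rw [circleExp_eq_exp_mul_I, mul_div_cancel₀ _ (by positivity)]
  simpa [hz] using Complex.norm_mul_exp_arg_mul_I z

lemma unitCircle_subset_image_circleExp_Ico (u : ℝ) :
    unitCircle ⊆ circleExp '' Ico u (u + 1) := fun z hz => by
  obtain ⟨t, rfl⟩ := exists_circleExp_eq hz
  obtain ⟨s, hs, hts⟩ := periodic_circleExp.exists_mem_Ico one_pos t u
  exact ⟨s, hs, hts.symm⟩

lemma mCircle_eq_map : mCircle = Measure.map circleExp (volume.restrict (Ico 0 1)) := rfl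

lemma mCircle_eq_one_of_unitCircle_subset {S : Set ℂ} (h : unitCircle ⊆ S) : mCircle S = 1 := by
  have hmeas : Measurable circleExp := continuous_circleExp.measurable
  have hvol : volume.restrict (Ico (0 : ℝ) 1) univ = 1 := by simp
  refine le_antisymm ?_ ?_
  · calc mCircle S ≤ mCircle univ := measure_mono (subset_univ S)
      _ = 1 := by rw [mCircle_eq_map, Measure.map_apply hmeas .univ, preimage_univ, hvol]
  · calc 1 = volume.restrict (Ico (0 : ℝ) 1) (circleExp ⁻¹' S) := by
          rw [eq_univ_of_forall fun t => mem_preimage.2 (h (norm_circleExp t)), hvol]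
      _ ≤ mCircle S := Measure.le_map_apply hmeas.aemeasurable S

def ContainsArc (S : Set ℂ) (ℓ : ℝ) : Prop := ∃ u, circleExp '' Ico u (u + ℓ) ⊆ S

lemma ContainsArc.mono {S : Set ℂ} {ℓ ℓ' : ℝ} (hS : ContainsArc S ℓ) (h : ℓ' ≤ ℓ) :
    ContainsArc S ℓ' :=
  let ⟨u, hu⟩ := hS
  ⟨u, (image_mono (Ico_subset_Ico_right (by linarith))).trans hu⟩

lemma ContainsArc.unitCircle_subset {S : Set ℂ} {ℓ : ℝ} (hS : ContainsArc S ℓ) (hℓ : 1 ≤ ℓ) :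
    unitCircle ⊆ S :=
  let ⟨u, hu⟩ := hS.mono hℓ
  (unitCircle_subset_image_circleExp_Ico u).trans hu

lemma HasDerivAt.finsetProd_of_eq_mul {𝕜 ι : Type*} [NontriviallyNormedField 𝕜] [DecidableEq ι]
    {s : Finset ι} {f : ι → 𝕜 → 𝕜} {c : ι → 𝕜} {x : 𝕜}
    (hf : ∀ i ∈ s, HasDerivAt (f i) (c i * f i x) x) :
    HasDerivAt (fun y => ∏ i ∈ s, f i y) ((∑ i ∈ s, c i) * ∏ i ∈ s, f i x) x := by
  refine (HasDerivAt.fun_finsetProd hf).congr_deriv ?_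
  rw [Finset.sum_mul]
  refine Finset.sum_congr rfl fun i hi => ?_
  rw [smul_eq_mul, ← Finset.mul_prod_erase s _ hi]
  ring

lemma poissonK_nonneg {α : ℂ} (hα : ‖α‖ ≤ 1) (z : ℂ) : 0 ≤ poissonK α z :=
  div_nonneg (by nlinarith [norm_nonneg α]) (sq_nonneg _)

lemma one_sub_sq_div_four_le_poissonK {α z : ℂ} (hα : ‖α‖ < 1) (hz : ‖z‖ = 1) :
    (1 - ‖α‖ ^ 2) / 4 ≤ poissonK α z := by
  have hzα : 0 < ‖z - α‖ := norm_pos_iff.2 (sub_ne_zero.2 fun h => by simp_all)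
  have hle : ‖z - α‖ ≤ 2 := by linarith [norm_sub_le z α]
  exact div_le_div_of_nonneg_left (by nlinarith [norm_nonneg α]) (by positivity) (by nlinarith)

section BlaschkeFactor

variable {α z : ℂ}

def blaschkeFactor (α z : ℂ) : ℂ := (z - α) / (1 - starRingEnd ℂ α * z)

lemma one_sub_conj_mul_eq (hz : ‖z‖ = 1) :
    1 - starRingEnd ℂ α * z = z * starRingEnd ℂ (z - α) := by
  have hzz : z * starRingEnd ℂ z = 1 := by rw [Complex.mul_conj', hz]; simp
  rw [map_sub, mul_sub, hzz]; ring

lemma sub_ne_zero_of_norm_lt (hα : ‖α‖ < 1) (hz : ‖z‖ = 1) : z - α ≠ 0 :=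
  sub_ne_zero.2 fun h => by simp_all

lemma one_sub_conj_mul_ne_zero (hα : ‖α‖ < 1) (hz : ‖z‖ = 1) : 1 - starRingEnd ℂ α * z ≠ 0 := by
  rw [one_sub_conj_mul_eq hz]
  exact mul_ne_zero (by rintro rfl; simp at hz)
    ((map_ne_zero _).2 (sub_ne_zero_of_norm_lt hα hz))

lemma norm_blaschkeFactor (hα : ‖α‖ < 1) (hz : ‖z‖ = 1) : ‖blaschkeFactor α z‖ = 1 := by
  rw [blaschkeFactor, norm_div, one_sub_conj_mul_eq hz, norm_mul, hz, Complex.norm_conj, one_mul,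
    div_self (norm_ne_zero_iff.2 (sub_ne_zero_of_norm_lt hα hz))]

lemma hasDerivAt_blaschkeFactor (hα : ‖α‖ < 1) (hz : ‖z‖ = 1) :
    HasDerivAt (blaschkeFactor α) (z⁻¹ * poissonK α z * blaschkeFactor α z) z := by
  have hden := one_sub_conj_mul_ne_zero hα hz
  have h := ((hasDerivAt_id z).sub_const α).div
    (((hasDerivAt_id z).const_mul (starRingEnd ℂ α)).const_sub 1) hden
  have hderiv : HasDerivAt (blaschkeFactor α) ((1 - ‖α‖ ^ 2) / (1 - starRingEnd ℂ α * z) ^ 2) z :=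
    h.congr_deriv (by
      simp only [id]
      linear_combination -((1 - starRingEnd ℂ α * z) ^ 2)⁻¹ * Complex.mul_conj' α)
  refine hderiv.congr_deriv ?_
  have hz0 : z ≠ 0 := by rintro rfl; simp at hz
  have hzα := sub_ne_zero_of_norm_lt hα hz
  have hconj : starRingEnd ℂ (z - α) ≠ 0 := (map_ne_zero _).2 hzα
  rw [blaschkeFactor, poissonK, one_sub_conj_mul_eq hz]
  push_cast
  rw [← Complex.mul_conj' (z - α)]
  field_simp

end BlaschkeFactor

section BlaschkeProduct

variable {n : ℕ} {θ₀ z : ℂ} {a : Fin n → ℂ}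

def blaschkeProduct (θ₀ : ℂ) (a : Fin n → ℂ) (z : ℂ) : ℂ := θ₀ * ∏ i, blaschkeFactor (a i) z

lemma norm_blaschkeProduct (hθ : ‖θ₀‖ = 1) (ha : ∀ i, ‖a i‖ < 1) (hz : ‖z‖ = 1) :
    ‖blaschkeProduct θ₀ a z‖ = 1 := by
  rw [blaschkeProduct, norm_mul, hθ, one_mul, norm_prod]
  exact Finset.prod_eq_one fun i _ => norm_blaschkeFactor (ha i) hz

lemma hasDerivAt_blaschkeProduct (ha : ∀ i, ‖a i‖ < 1) (hz : ‖z‖ = 1) :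
    HasDerivAt (blaschkeProduct θ₀ a)
      (z⁻¹ * (∑ i, poissonK (a i) z : ℝ) * blaschkeProduct θ₀ a z) z := by
  have h := (HasDerivAt.finsetProd_of_eq_mul (s := Finset.univ)
    fun i _ => hasDerivAt_blaschkeFactor (ha i) hz).const_mul θ₀
  refine h.congr_deriv ?_
  rw [blaschkeProduct, Complex.ofReal_sum, ← Finset.mul_sum]
  ring

lemma norm_deriv_blaschkeProduct (hθ : ‖θ₀‖ = 1) (ha : ∀ i, ‖a i‖ < 1) (hz : ‖z‖ = 1) :
    ‖deriv (blaschkeProduct θ₀ a) z‖ = ∑ i, poissonK (a i) z := by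
  rw [(hasDerivAt_blaschkeProduct ha hz).deriv, norm_mul, norm_mul, norm_inv, hz,
    norm_blaschkeProduct hθ ha hz, Complex.norm_real, Real.norm_of_nonneg
      (Finset.sum_nonneg fun i _ => poissonK_nonneg (ha i).le z)]
  ring

end BlaschkeProduct

lemma IsBlaschke.eq_blaschkeProduct {n : ℕ} {B : ℂ → ℂ} (hB : IsBlaschke n B) :
    ∃ (θ₀ : ℂ) (a : Fin n → ℂ), ‖θ₀‖ = 1 ∧ (∀ i, ‖a i‖ < 1) ∧ B = blaschkeProduct θ₀ a :=
  let ⟨_, θ₀, a, hθ, ha, hB⟩ := hB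
  ⟨θ₀, a, hθ, ha, funext hB⟩

lemma derivInf_nonneg (B : ℂ → ℂ) : 0 ≤ derivInf B :=
  Real.iInf_nonneg fun _ => norm_nonneg _

lemma derivInf_le (B : ℂ → ℂ) {z : ℂ} (hz : ‖z‖ = 1) : derivInf B ≤ ‖deriv B z‖ :=
  ciInf_le ⟨0, by rintro _ ⟨w, rfl⟩; exact norm_nonneg _⟩ (⟨z, hz⟩ : unitCircle)

lemma IsBlaschke.derivInf_pos {n : ℕ} {B : ℂ → ℂ} (hB : IsBlaschke n B) : 0 < derivInf B := by
  obtain ⟨θ₀, a, hθ, ha, rfl⟩ := hB.eq_blaschkeProduct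
  have i₀ : Fin n := ⟨0, hB.1⟩
  have : Nonempty unitCircle := ⟨⟨1, by simp [unitCircle]⟩⟩
  refine lt_of_lt_of_le (by nlinarith [ha i₀, norm_nonneg (a i₀)] : 0 < (1 - ‖a i₀‖ ^ 2) / 4)
    (le_ciInf fun z => ?_)
  rw [norm_deriv_blaschkeProduct hθ ha z.2]
  exact (one_sub_sq_div_four_le_poissonK (ha i₀) z.2).trans
    (Finset.single_le_sum (fun i _ => poissonK_nonneg (ha i).le _) (Finset.mem_univ i₀))

/-- With `g` a primitive of `ψ`, the function `t ↦ circleExp (-g t) * f t` has derivative zero. -/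
lemma exists_lift_of_hasDerivAt {f : ℝ → ℂ} {ψ : ℝ → ℝ} (hψ : Continuous ψ)
    (hf : ∀ t, HasDerivAt f (2 * Real.pi * Complex.I * ψ t * f t) t) (hf0 : ‖f 0‖ = 1) :
    ∃ g : ℝ → ℝ, (∀ t, HasDerivAt g (ψ t) t) ∧ ∀ t, f t = circleExp (g t) := by
  obtain ⟨γ, hγ⟩ := exists_circleExp_eq hf0
  set g : ℝ → ℝ := fun t => γ + ∫ s in (0 : ℝ)..t, ψ s
  have hg : ∀ t, HasDerivAt g (ψ t) t := fun t =>
    ((hψ.integral_hasStrictDerivAt 0 t).hasDerivAt).const_add γ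
  have hderiv : ∀ t, HasDerivAt (fun t => circleExp (-g t) * f t) 0 t := fun t => by
    have h := ((hasDerivAt_circleExp (-g t)).scomp t (hg t).neg).mul (hf t)
    refine h.congr_deriv ?_
    simp only [Complex.real_smul, Function.comp_apply, Pi.neg_apply]
    push_cast
    ring
  have hconst : ∀ t, circleExp (-g t) * f t = 1 := fun t => by
    rw [is_const_of_deriv_eq_zero (fun t => (hderiv t).differentiableAt)
      (fun t => (hderiv t).deriv) t 0]
    simp [g, ← hγ, circleExp_neg_mul_self]
  refine ⟨g, hg, fun t => ?_⟩
  calc f t = (circleExp (-g t) * circleExp (g t)) * f t := by rw [circleExp_neg_mul_self, one_mul]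
    _ = circleExp (g t) := by rw [mul_comm (circleExp _), mul_assoc, hconst, mul_one]

lemma continuous_poissonK_circleExp {α : ℂ} (hα : ‖α‖ < 1) :
    Continuous fun t => poissonK α (circleExp t) := by
  unfold poissonK
  refine continuous_const.div ((continuous_circleExp.sub continuous_const).norm.pow 2) fun t => ?_
  exact pow_ne_zero 2 (norm_ne_zero_iff.2 (sub_ne_zero_of_norm_lt hα (norm_circleExp t)))

/-- A Blaschke product stretches arcs by at least `derivInf`: lifting `B ∘ circleExp` to
`circleExp ∘ g`, the speed of `g` is `|B'|` on the circle. -/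
lemma IsBlaschke.containsArc_image {n : ℕ} {B : ℂ → ℂ} (hB : IsBlaschke n B) {S : Set ℂ}
    {ℓ : ℝ} (hS : ContainsArc S ℓ) (hℓ : 0 ≤ ℓ) : ContainsArc (B '' S) (derivInf B * ℓ) := by
  obtain ⟨θ₀, a, hθ, ha, rfl⟩ := hB.eq_blaschkeProduct
  set ψ : ℝ → ℝ := fun t => ∑ i, poissonK (a i) (circleExp t)
  have hψ : Continuous ψ := continuous_finsetSum _ fun i _ => continuous_poissonK_circleExp (ha i)
  have hderiv : ∀ t, HasDerivAt (blaschkeProduct θ₀ a ∘ circleExp)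
      (2 * Real.pi * Complex.I * ψ t * (blaschkeProduct θ₀ a ∘ circleExp) t) t := fun t => by
    refine ((hasDerivAt_blaschkeProduct ha (norm_circleExp t)).comp t
      (hasDerivAt_circleExp t)).congr_deriv ?_
    have : circleExp t ≠ 0 := Complex.exp_ne_zero _
    simp only [Function.comp_apply, ψ]
    field_simp
  obtain ⟨g, hg, hlift⟩ :=
    exists_lift_of_hasDerivAt hψ hderiv (norm_blaschkeProduct hθ ha (norm_circleExp 0))
  obtain ⟨u, hu⟩ := hS
  have hgrowth : derivInf (blaschkeProduct θ₀ a) * ℓ ≤ g (u + ℓ) - g u := by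
    have h := mul_sub_le_image_sub_of_le_deriv (C := derivInf (blaschkeProduct θ₀ a))
      (fun t => (hg t).differentiableAt) (fun t => ?_) (le_add_of_nonneg_right (a := u) hℓ)
    · rwa [add_sub_cancel_left] at h
    rw [(hg t).deriv]
    exact (derivInf_le _ (norm_circleExp t)).trans_eq
      (norm_deriv_blaschkeProduct hθ ha (norm_circleExp t))
  have hg_cont : Continuous g := continuous_iff_continuousAt.2 fun t => (hg t).continuousAt
  refine ⟨g u, ?_⟩
  calc circleExp '' Ico (g u) (g u + derivInf (blaschkeProduct θ₀ a) * ℓ)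
      ⊆ circleExp '' Ico (g u) (g (u + ℓ)) := image_mono (Ico_subset_Ico_right (by linarith))
    _ ⊆ circleExp '' (g '' Ico u (u + ℓ)) :=
        image_mono (intermediate_value_Ico (by linarith) hg_cont.continuousOn)
    _ = blaschkeProduct θ₀ a '' (circleExp '' Ico u (u + ℓ)) := by
        rw [image_image, image_image]
        exact image_congr fun t _ => (hlift t).symm
    _ ⊆ blaschkeProduct θ₀ a '' S := image_mono hu

lemma containsArc_backIter {Ω : Type*} {σinv : Ω → Ω} {T : Ω → ℂ → ℂ} {deg : Ω → ℕ}
    (hB : ∀ ω, IsBlaschke (deg ω) (T ω)) (ω : Ω) (n : ℕ) {S : Set ℂ} {ℓ : ℝ}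
    (hS : ContainsArc S ℓ) (hℓ : 0 ≤ ℓ) :
    ContainsArc (backIter σinv T n ω '' S)
      ((∏ i ∈ Finset.range n, derivInf (T (σinv^[i + 1] ω))) * ℓ) := by
  induction n generalizing S ℓ with
  | zero => simpa [backIter] using hS
  | succ n ih =>
    have h := ih ((hB (σinv^[n + 1] ω)).containsArc_image hS hℓ)
      (mul_nonneg (derivInf_nonneg _) hℓ)
    have himage : backIter σinv T (n + 1) ω '' S =
        backIter σinv T n ω '' (T (σinv^[n + 1] ω) '' S) := by
      rw [image_image]; rfl
    rwa [Finset.prod_range_succ, mul_assoc, himage]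

section Birkhoff

variable {α : Type*} {f : α → α} {g : α → ℝ}

def birkhoffMax (f : α → α) (g : α → ℝ) : ℕ → α → ℝ
  | 0, _ => 0
  | N + 1, x => max (birkhoffMax f g N x) (birkhoffSum f g (N + 1) x)

lemma birkhoffMax_nonneg (N : ℕ) (x : α) : 0 ≤ birkhoffMax f g N x := by
  induction N with
  | zero => exact le_rfl
  | succ N ih => exact ih.trans (le_max_left _ _)

lemma monotone_birkhoffMax (x : α) : Monotone fun N => birkhoffMax f g N x :=
  monotone_nat_of_le_succ fun _ => le_max_left _ _

lemma birkhoffSum_le_birkhoffMax {k N : ℕ} (hk : k ≤ N) (x : α) :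
    birkhoffSum f g k x ≤ birkhoffMax f g N x := by
  induction N with
  | zero => simp [Nat.le_zero.1 hk, birkhoffMax]
  | succ N ih =>
    rcases hk.lt_or_eq with hk | rfl
    · exact (ih (Nat.lt_succ_iff.1 hk)).trans (le_max_left _ _)
    · exact le_max_right _ _

lemma exists_birkhoffMax_le_birkhoffSum {N : ℕ} {x : α} (h : 0 < birkhoffMax f g N x) :
    ∃ k < N, birkhoffMax f g N x ≤ birkhoffSum f g (k + 1) x := by
  induction N with
  | zero => simp [birkhoffMax] at h
  | succ N ih =>
    rcases le_or_gt (birkhoffMax f g N x) (birkhoffSum f g (N + 1) x) with hN | hN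
    · exact ⟨N, N.lt_succ_self, max_le hN le_rfl⟩
    · have heq : birkhoffMax f g (N + 1) x = birkhoffMax f g N x := max_eq_left hN.le
      rw [heq] at h ⊢
      obtain ⟨k, hk, hle⟩ := ih h
      exact ⟨k, hk.trans N.lt_succ_self, hle⟩

/-- Where the running maximum is positive it is attained by some `S (k + 1) = g + S k ∘ f`. -/
lemma birkhoffMax_sub_birkhoffMax_comp_le {N : ℕ} {x : α} (h : 0 < birkhoffMax f g N x) :
    birkhoffMax f g N x - birkhoffMax f g N (f x) ≤ g x := by
  obtain ⟨k, hk, hle⟩ := exists_birkhoffMax_le_birkhoffSum h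
  rw [birkhoffSum_succ'] at hle
  linarith [birkhoffSum_le_birkhoffMax (f := f) (g := g) hk.le (f x)]

lemma bddAbove_birkhoffSum_comp_iff (x : α) :
    BddAbove (range fun n => birkhoffSum f g n (f x)) ↔
      BddAbove (range fun n => birkhoffSum f g n x) := by
  simp only [bddAbove_def, forall_mem_range]
  constructor
  · rintro ⟨c, hc⟩
    refine ⟨max 0 (g x + c), fun n => ?_⟩
    cases n with
    | zero => simp
    | succ n => rw [birkhoffSum_succ']; exact le_max_of_le_right (by linarith [hc n])
  · rintro ⟨c, hc⟩
    refine ⟨c - g x, fun n => ?_⟩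
    linarith [birkhoffSum_succ' f g n x, hc (n + 1)]

variable [MeasurableSpace α] {μ : Measure α}

lemma measurable_birkhoffSum (hf : Measurable f) (hg : Measurable g) (n : ℕ) :
    Measurable (birkhoffSum f g n) :=
  Finset.measurable_sum _ fun k _ => hg.comp (hf.iterate k)

lemma measurable_birkhoffMax (hf : Measurable f) (hg : Measurable g) (N : ℕ) :
    Measurable (birkhoffMax f g N) := by
  induction N with
  | zero => exact measurable_const
  | succ N ih => exact ih.max (measurable_birkhoffSum hf hg _)

lemma integrable_birkhoffSum (hf : MeasurePreserving f μ μ) (hg : Integrable g μ) (n : ℕ) :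
    Integrable (birkhoffSum f g n) μ :=
  integrable_finsetSum _ fun k _ => ((hf.iterate k).integrable_comp hg.1).2 hg

lemma integrable_birkhoffMax (hf : MeasurePreserving f μ μ) (hg : Integrable g μ) (N : ℕ) :
    Integrable (birkhoffMax f g N) μ := by
  induction N with
  | zero => exact integrable_zero _ _ _
  | succ N ih => exact ih.sup (integrable_birkhoffSum hf hg _)

/-- **Maximal ergodic theorem**, after Garsia. -/
theorem setIntegral_birkhoffMax_pos_nonneg (hf : MeasurePreserving f μ μ) (hgm : Measurable g)
    (hg : Integrable g μ) (N : ℕ) : 0 ≤ ∫ x in {x | 0 < birkhoffMax f g N x}, g x ∂μ := by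
  set M := birkhoffMax f g N
  set P := {x | 0 < M x}
  have hMm : Measurable M := measurable_birkhoffMax hf.measurable hgm N
  have hP : MeasurableSet P := measurableSet_lt measurable_const hMm
  have hM : Integrable M μ := integrable_birkhoffMax hf hg N
  have hMf : Integrable (M ∘ f) μ := (hf.integrable_comp hM.1).2 hM
  have hcomp : ∫ x, M (f x) ∂μ = ∫ x, M x ∂μ := by
    rw [← integral_map hf.measurable.aemeasurable (hf.map_eq ▸ hMm.aestronglyMeasurable),
      hf.map_eq]
  calc 0 = ∫ x, M x ∂μ - ∫ x, M (f x) ∂μ := by rw [hcomp, sub_self]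
    _ ≤ ∫ x in P, M x ∂μ - ∫ x in P, M (f x) ∂μ := by
        have hMP : ∫ x in P, M x ∂μ = ∫ x, M x ∂μ :=
          setIntegral_eq_integral_of_forall_compl_eq_zero fun x hx =>
            le_antisymm (not_lt.1 hx) (birkhoffMax_nonneg N x)
        have hMfP : ∫ x in P, M (f x) ∂μ ≤ ∫ x, M (f x) ∂μ :=
          setIntegral_le_integral hMf (ae_of_all _ fun x => birkhoffMax_nonneg N (f x))
        linarith
    _ = ∫ x in P, (M x - M (f x)) ∂μ := (integral_sub hM.integrableOn hMf.integrableOn).symm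
    _ ≤ ∫ x in P, g x ∂μ := setIntegral_mono_on (hM.sub hMf).integrableOn hg.integrableOn hP
        fun x hx => birkhoffMax_sub_birkhoffMax_comp_le hx

lemma integral_nonneg_of_ae_exists_birkhoffSum_pos (hf : MeasurePreserving f μ μ)
    (hgm : Measurable g) (hg : Integrable g μ) (h : ∀ᵐ x ∂μ, ∃ n, 0 < birkhoffSum f g n x) :
    0 ≤ ∫ x, g x ∂μ := by
  set P : ℕ → Set α := fun N => {x | 0 < birkhoffMax f g N x}
  have hP : ∀ N, MeasurableSet (P N) := fun N =>
    measurableSet_lt measurable_const (measurable_birkhoffMax hf.measurable hgm N)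
  have hU : ∀ᵐ x ∂μ, x ∈ ⋃ N, P N := h.mono fun x ⟨n, hn⟩ =>
    mem_iUnion.2 ⟨n, hn.trans_le (birkhoffSum_le_birkhoffMax le_rfl x)⟩
  have hlim := tendsto_setIntegral_of_monotone hP
    (fun _ _ hNM _ hx => hx.trans_le (monotone_birkhoffMax _ hNM)) hg.integrableOn
  rw [Measure.restrict_eq_self_of_ae_mem hU] at hlim
  exact ge_of_tendsto hlim (Eventually.of_forall (setIntegral_birkhoffMax_pos_nonneg hf hgm hg))

theorem Ergodic.ae_bddAbove_birkhoffSum [IsProbabilityMeasure μ] (hf : Ergodic f μ)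
    (hgm : Measurable g) (hg : Integrable g μ) (hneg : ∫ x, g x ∂μ < 0) :
    ∀ᵐ x ∂μ, BddAbove (range fun n => birkhoffSum f g n x) := by
  set E := {x | BddAbove (range fun n => birkhoffSum f g n x)}
  have hE : MeasurableSet E :=
    measurableSet_bddAbove_range (measurable_birkhoffSum hf.measurable hgm)
  have hinv : f ⁻¹' E = E := ext bddAbove_birkhoffSum_comp_iff
  rcases hf.prob_eq_zero_or_one hE hinv with h0 | h1
  · refine absurd (integral_nonneg_of_ae_exists_birkhoffSum_pos hf.toMeasurePreserving hgm hg ?_)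
      hneg.not_ge
    filter_upwards [measure_eq_zero_iff_ae_notMem.1 h0] with x hx
    obtain ⟨_, ⟨n, rfl⟩, hn⟩ := not_bddAbove_iff.1 hx 0
    exact ⟨n, hn⟩
  · exact (ae_iff_measure_eq hE.nullMeasurableSet).2 (h1.trans measure_univ.symm)

/-- Apply boundedness to `ε - g` with `ε = (∫ g) / 2`, after replacing `g` by a measurable
version; the Birkhoff sums of the two agree a.e. because `f` is measure preserving. -/
theorem Ergodic.ae_tendsto_birkhoffSum_atTop [IsProbabilityMeasure μ] (hf : Ergodic f μ)
    (hg : Integrable g μ) (hpos : 0 < ∫ x, g x ∂μ) :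
    ∀ᵐ x ∂μ, Tendsto (fun n => birkhoffSum f g n x) atTop atTop := by
  set g' := hg.1.mk g
  have hg' : Integrable g' μ := hg.congr hg.1.ae_eq_mk
  set ε := (∫ x, g x ∂μ) / 2
  have hε : 0 < ε := half_pos hpos
  have hneg : ∫ x, ε - g' x ∂μ < 0 := by
    rw [integral_sub (integrable_const ε) hg', ← integral_congr_ae hg.1.ae_eq_mk]
    simp only [integral_const, probReal_univ, one_smul, ε]
    linarith
  have hbdd := hf.ae_bddAbove_birkhoffSum (hg.1.stronglyMeasurable_mk.measurable.const_sub ε)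
    ((integrable_const ε).sub hg') hneg
  have heq : ∀ᵐ x ∂μ, ∀ n, birkhoffSum f g n x = birkhoffSum f g' n x := ae_all_iff.2 fun n =>
    hf.quasiMeasurePreserving.birkhoffSum_ae_eq_of_ae_eq hg.1.ae_eq_mk n
  filter_upwards [hbdd, heq] with x ⟨C, hC⟩ hx
  have hlower : ∀ n : ℕ, n * ε - C ≤ birkhoffSum f g n x := fun n => by
    have h : birkhoffSum f ((fun _ => ε) - g') n x ≤ C := hC ⟨n, rfl⟩
    rw [birkhoffSum_sub f (fun _ => ε) g', birkhoffSum_of_comp_eq rfl, Pi.smul_apply,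
      nsmul_eq_mul] at h
    linarith [hx n]
  exact tendsto_atTop_mono hlower
    (tendsto_atTop_add_const_right _ _ (tendsto_natCast_atTop_atTop.atTop_mul_const hε))

theorem Ergodic.of_leftInverse {g : α → α} (hf : Ergodic f μ) (hgf : Function.LeftInverse g f)
    (hfg : Function.RightInverse g f) (hg : Measurable g) : Ergodic g μ :=
  Ergodic.symm (e := ⟨⟨f, g, hgf, hfg⟩, hf.measurable, hg⟩) hf

end Birkhoff

lemma prod_derivInf_eq_exp_birkhoffSum {Ω : Type*} {σinv : Ω → Ω} {T : Ω → ℂ → ℂ} {deg : Ω → ℕ}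
    (hB : ∀ ω, IsBlaschke (deg ω) (T ω)) (n : ℕ) (ω : Ω) :
    ∏ i ∈ Finset.range n, derivInf (T (σinv^[i + 1] ω)) =
      Real.exp (birkhoffSum σinv (fun ω => Real.log (derivInf (T ω))) n (σinv ω)) := by
  rw [birkhoffSum, Real.exp_sum]
  refine Finset.prod_congr rfl fun i _ => ?_
  rw [← Function.iterate_succ_apply, Real.exp_log (hB _).derivInf_pos]

theorem covering_lemma_general {Ω : Type*} [MeasurableSpace Ω] (ℙ : Measure Ω) [IsProbabilityMeasure ℙ]
    (σ σinv : Ω → Ω) (herg : Ergodic σ ℙ)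
    (hinv1 : Function.LeftInverse σinv σ) (hinv2 : Function.RightInverse σinv σ)
    (hσinv : Measurable σinv)
    (T : Ω → ℂ → ℂ) (deg : Ω → ℕ) (hB : ∀ ω, IsBlaschke (deg ω) (T ω))
    (hLogInt : Integrable (fun ω => Real.log (derivInf (T ω))) ℙ)
    (hLogPos : 0 < ∫ ω, Real.log (derivInf (T ω)) ∂ℙ)
    (A : Set ℂ) (a b : ℝ) (hab : a < b)
    (hA : A = (fun t : ℝ => Complex.exp (2 * (Real.pi : ℂ) * Complex.I * (t : ℂ))) '' Set.Ico a b) :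
    ∀ᵐ ω ∂ℙ, ∃ nc : ℕ, ∀ n ≥ nc, mCircle (backIter σinv T n ω '' A) = 1 := by
  filter_upwards [(herg.of_leftInverse hinv1 hinv2 hσinv).ae_tendsto_birkhoffSum_atTop
    hLogInt hLogPos] with ω hω
  have hshift := tendsto_atTop_add_const_right _ (-Real.log (derivInf (T ω)))
    (hω.comp (tendsto_add_atTop_nat 1))
  have hgrowth : Tendsto (fun n => (∏ i ∈ Finset.range n, derivInf (T (σinv^[i + 1] ω))) * (b - a))
      atTop atTop := by
    simp_rw [prod_derivInf_eq_exp_birkhoffSum hB]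
    refine (Real.tendsto_exp_atTop.comp (hshift.congr fun n => ?_)).atTop_mul_const (sub_pos.2 hab)
    simp [birkhoffSum_succ']
  obtain ⟨nc, hnc⟩ := eventually_atTop.1 (hgrowth.eventually_ge_atTop 1)
  have hA' : ContainsArc A (b - a) := ⟨a, by rw [hA, add_sub_cancel]; rfl⟩
  exact ⟨nc, fun n hn => mCircle_eq_one_of_unitCircle_subset
    ((containsArc_backIter hB ω n hA' (sub_pos.2 hab).le).unitCircle_subset (hnc n hn))⟩

/-- covering lemma for expanding-on-average Blaschke product cocycles. -/
theorem covering_lemma {Ω : Type*} [MeasurableSpace Ω] (ℙ : Measure Ω) [IsProbabilityMeasure ℙ]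
    (σ σinv : Ω → Ω) (herg : Ergodic σ ℙ)
    (hinv1 : Function.LeftInverse σinv σ) (hinv2 : Function.RightInverse σinv σ)
    (hσinv : Measurable σinv)
    (T : Ω → ℂ → ℂ) (deg : Ω → ℕ) (hB : ∀ ω, IsBlaschke (deg ω) (T ω))
    (hTmeas : Measurable (Function.uncurry T))
    (hInfMeas : Measurable fun ω => derivInf (T ω))
    (hLogInt : Integrable (fun ω => Real.log (derivInf (T ω))) ℙ)
    (hLogPos : 0 < ∫ ω, Real.log (derivInf (T ω)) ∂ℙ)
    (A : Set ℂ) (a b : ℝ) (h0a : 0 ≤ a) (hab : a < b) (hb1 : b ≤ 1)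
    (hA : A = (fun t : ℝ => Complex.exp (2 * (Real.pi : ℂ) * Complex.I * (t : ℂ))) '' Set.Ico a b)
    (hA0 : 0 < mCircle A) (hA1 : mCircle A < 1) :
    ∀ᵐ ω ∂ℙ, ∃ nc : ℕ, ∀ n ≥ nc, mCircle (backIter σinv T n ω '' A) = 1 :=
  covering_lemma_general ℙ σ σinv herg hinv1 hinv2 hσinv T deg hB hLogInt hLogPos A a b hab hA
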